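/- arXiv:1709.06079 — 2 statements merged into one kernel-verified Lean document; each statement's English description precedes it below -/
import Mathlib

section
/- Let V ∈ ℝ^{n×d} have full row rank n ≤ d and Σ = V Vᵀ. Among all P ∈ ℝ^{n×n} with (P V)(P V)ᵀ = I, the choice P* = Σ^{-1/2} minimizes tr((P V − V)(P V − V)ᵀ). -/
/-!
For every feasible `P` one has `(P V)(P V)ᵀ = 1`, so the objective equals
`tr 1 - 2 tr(P Σ) + tr Σ` and the task is to maximize `tr(P Σ)`. Write `Σ = S²` with
`S = Σ^{1/2} = P*⁻¹`. Then `Q = P S` satisfies `Q Qᵀ = P Σ Pᵀ = 1`, so `Q` is orthogonal and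
`tr(P Σ) = tr(Q S) ≤ tr S = tr(P* Σ)`; the inequality `tr(Q S) ≤ tr S` for orthogonal `Q` and
positive semidefinite `S = Bᵀ B` is the expansion of `‖B - B Qᵀ‖² ≥ 0` in the Frobenius norm.
-/

open Matrix

namespace Matrix

variable {ι m n R : Type*} [Fintype ι] [Fintype m] [Fintype n]

theorem trace_sub_mul_transpose_sub [CommRing R] (A B : Matrix m n R) :
    ((A - B) * (A - B)ᵀ).trace = (A * Aᵀ).trace - 2 * (A * Bᵀ).trace + (B * Bᵀ).trace := by
  have hBA : (B * Aᵀ).trace = (A * Bᵀ).trace := by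
    rw [← trace_transpose, transpose_mul, transpose_transpose]
  rw [transpose_sub, Matrix.sub_mul, Matrix.mul_sub, Matrix.mul_sub, trace_sub, trace_sub,
    trace_sub, hBA]
  ring

variable [DecidableEq ι]

theorem trace_mul_transpose_mul_self_le {Q : Matrix ι ι ℝ} (hQ : Qᵀ * Q = 1)
    (B : Matrix ι ι ℝ) : (Q * (Bᵀ * B)).trace ≤ (Bᵀ * B).trace := by
  have hdefect : 0 ≤ ((B - B * Qᵀ)ᵀ * (B - B * Qᵀ)).trace :=
    (posSemidef_conjTranspose_mul_self (B - B * Qᵀ)).trace_nonneg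
  have hexpand : ((B - B * Qᵀ)ᵀ * (B - B * Qᵀ)).trace
      = 2 * ((Bᵀ * B).trace - (Q * (Bᵀ * B)).trace) := by
    have h1 : (Bᵀ * (B * Qᵀ)).trace = (Q * (Bᵀ * B)).trace := by
      rw [← trace_transpose, transpose_mul, transpose_mul, transpose_transpose,
        transpose_transpose, mul_assoc]
    have h2 : ((B * Qᵀ)ᵀ * B).trace = (Q * (Bᵀ * B)).trace := by
      rw [transpose_mul, transpose_transpose, mul_assoc]
    have h3 : ((B * Qᵀ)ᵀ * (B * Qᵀ)).trace = (Bᵀ * B).trace := by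
      rw [transpose_mul, transpose_transpose, mul_assoc, trace_mul_comm, mul_assoc, mul_assoc, hQ,
        mul_one]
    rw [transpose_sub, sub_mul, mul_sub, mul_sub, trace_sub, trace_sub, trace_sub, h1, h2, h3]
    ring
  linarith

open scoped MatrixOrder in
theorem trace_mul_le_trace_of_posSemidef {Q S : Matrix ι ι ℝ} (hQ : Qᵀ * Q = 1)
    (hS : S.PosSemidef) : (Q * S).trace ≤ S.trace := by
  obtain ⟨B, rfl⟩ : ∃ B : Matrix ι ι ℝ, S = Bᵀ * B := by
    refine ⟨CFC.sqrt S, ?_⟩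
    have hB : (CFC.sqrt S)ᵀ = CFC.sqrt S := by
      simpa [IsHermitian] using (CFC.sqrt_nonneg S).posSemidef.isHermitian
    rw [hB, CFC.sqrt_mul_sqrt_self S hS.nonneg]
  exact trace_mul_transpose_mul_self_le hQ B

theorem trace_mul_mul_self_le {P S : Matrix ι ι ℝ} (hS : S.PosSemidef)
    (hP : P * (S * S) * Pᵀ = 1) : (P * (S * S)).trace ≤ S.trace := by
  have hST : Sᵀ = S := by simpa [IsHermitian] using hS.isHermitian
  have hQ : (P * S)ᵀ * (P * S) = 1 := by
    rw [mul_eq_one_comm, transpose_mul, hST, ← hP]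
    simp only [mul_assoc]
  rw [← mul_assoc]
  exact trace_mul_le_trace_of_posSemidef hQ hS

theorem eq_inv_mul_inv_of_mul_self_eq_inv [CommRing R] {A S : Matrix ι ι R} (hA : IsUnit A)
    (hAS : A * A = S⁻¹) : S = A⁻¹ * A⁻¹ := by
  have hS : IsUnit S := isUnit_nonsing_inv_iff.mp (hAS ▸ hA.mul hA)
  rw [← mul_inv_rev, hAS, nonsing_inv_nonsing_inv S ((isUnit_iff_isUnit_det S).mp hS)]

end Matrix

theorem stmt_8_general {n d : ℕ} (V : Matrix (Fin n) (Fin d) ℝ)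
    (Pstar : Matrix (Fin n) (Fin n) ℝ)
    (hPstar : Pstar.PosDef) (hPsq : Pstar * Pstar = (V * Vᵀ)⁻¹)
    (P : Matrix (Fin n) (Fin n) ℝ) (hP : (P * V) * (P * V)ᵀ = 1) :
    ((Pstar * V - V) * (Pstar * V - V)ᵀ).trace ≤ ((P * V - V) * (P * V - V)ᵀ).trace := by
  set S := Pstar⁻¹ with hS
  have hdet : IsUnit Pstar.det := (isUnit_iff_isUnit_det _).mp hPstar.isUnit
  have hPstarT : Pstarᵀ = Pstar := by simpa [IsHermitian] using hPstar.isHermitian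
  have hVV : V * Vᵀ = S * S := eq_inv_mul_inv_of_mul_self_eq_inv hPstar.isUnit hPsq
  have hPstarVV : Pstar * (V * Vᵀ) = S := by
    rw [hVV, ← mul_assoc, hS, mul_nonsing_inv _ hdet, one_mul]
  have hPstarV : (Pstar * V) * (Pstar * V)ᵀ = 1 := by
    rw [transpose_mul, hPstarT, ← Matrix.mul_assoc, Matrix.mul_assoc Pstar V, hPstarVV, hS,
      nonsing_inv_mul _ hdet]
  have hPVV : P * (S * S) * Pᵀ = 1 := by
    rw [← hVV, ← hP, transpose_mul]
    simp only [Matrix.mul_assoc]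
  rw [trace_sub_mul_transpose_sub, trace_sub_mul_transpose_sub, hP, hPstarV,
    Matrix.mul_assoc Pstar, Matrix.mul_assoc P, hPstarVV, hVV]
  linarith [trace_mul_mul_self_le hPstar.inv.posSemidef hPVV]

theorem stmt_8 {n d : ℕ} (hnd : n ≤ d) (V : Matrix (Fin n) (Fin d) ℝ)
    (hrank : V.rank = n) (Pstar : Matrix (Fin n) (Fin n) ℝ)
    (hPstar : Pstar.PosDef) (hPsq : Pstar * Pstar = (V * Vᵀ)⁻¹)
    (P : Matrix (Fin n) (Fin n) ℝ) (hP : (P * V) * (P * V)ᵀ = 1) :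
    ((Pstar * V - V) * (Pstar * V - V)ᵀ).trace ≤ ((P * V - V) * (P * V - V)ᵀ).trace :=
  stmt_8_general V Pstar hPstar hPsq P hP
end

section
/- Let Σ be a symmetric positive definite n×n matrix. The map P ↦ tr((P V − V)(P V − V)ᵀ) over {P : P Σ Pᵀ = I}, where Σ = V Vᵀ, attains its minimum value n + tr(Σ) − 2 tr(Σ^{1/2}). -/
/-! Writing Σ = S², the objective equals tr(P Σ Pᵀ) + tr Σ - 2 tr(P Σ) = n + tr Σ - 2 tr(Q S) with
Q = P S, and the constraint P Σ Pᵀ = 1 says exactly that Q is orthogonal. For positive semidefinite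
S and orthogonal Q one has tr(Q S) ≤ tr S, with equality at Q = 1, i.e. at P = S⁻¹. -/

open Matrix

namespace Matrix

variable {R m n : Type*} [Fintype m] [Fintype n]

theorem trace_mul_transpose_mul_sub_self [CommRing R] (P : Matrix m m R) (V : Matrix m n R) :
    ((P * V - V) * (P * V - V)ᵀ).trace
      = (P * (V * Vᵀ) * Pᵀ).trace + (V * Vᵀ).trace - 2 * (P * (V * Vᵀ)).trace := by
  have h_cross : (V * Vᵀ * Pᵀ).trace = (P * (V * Vᵀ)).trace := by
    rw [← trace_transpose, transpose_mul, transpose_transpose, transpose_mul, transpose_transpose]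
  have h_expand : (P * V - V) * (P * V - V)ᵀ
      = P * (V * Vᵀ) * Pᵀ - P * (V * Vᵀ) - V * Vᵀ * Pᵀ + V * Vᵀ := by
    simp only [transpose_sub, transpose_mul, Matrix.sub_mul, Matrix.mul_sub, Matrix.mul_assoc]
    abel
  rw [h_expand, trace_add, trace_sub, trace_sub, h_cross]
  ring

-- `(1 - Q) S (1 - Q)ᵀ` is positive semidefinite, and its trace is `2 tr S - 2 tr (Q S)`.
theorem PosSemidef.trace_mul_le_trace_of_mul_transpose_eq_one [DecidableEq n]
    {S Q : Matrix n n ℝ} (hS : S.PosSemidef) (hQ : Q * Qᵀ = 1) : (Q * S).trace ≤ S.trace := by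
  have hSsymm : Sᵀ = S := by simpa [IsHermitian] using hS.isHermitian
  have hQtQ : Qᵀ * Q = 1 := mul_eq_one_comm.mp hQ
  have h_nonneg : 0 ≤ ((1 - Q) * S * (1 - Q)ᵀ).trace := by
    simpa only [conjTranspose_eq_transpose_of_trivial] using
      (hS.mul_mul_conjTranspose_same (1 - Q)).trace_nonneg
  have h_transpose : (S * Qᵀ).trace = (Q * S).trace := by
    rw [← trace_transpose, transpose_mul, transpose_transpose, hSsymm]
  have h_trace : ((1 - Q) * S * (1 - Q)ᵀ).trace = 2 * S.trace - 2 * (Q * S).trace := by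
    have h_expand : (1 - Q) * S * (1 - Q)ᵀ = S - Q * S - S * Qᵀ + Q * S * Qᵀ := by
      simp only [transpose_sub, transpose_one, Matrix.sub_mul, Matrix.mul_sub, Matrix.one_mul,
        Matrix.mul_one]
      abel
    rw [h_expand, trace_add, trace_sub, trace_sub, h_transpose, trace_mul_cycle, hQtQ, one_mul]
    ring
  linarith

end Matrix

theorem stmt_11_general {n d : ℕ} (V : Matrix (Fin n) (Fin d) ℝ)
    (S : Matrix (Fin n) (Fin n) ℝ)
    (hS : S.PosDef) (hSsq : S * S = V * Vᵀ) :
    IsLeast {t : ℝ | ∃ P : Matrix (Fin n) (Fin n) ℝ,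
        P * (V * Vᵀ) * Pᵀ = 1 ∧ t = ((P * V - V) * (P * V - V)ᵀ).trace}
      ((n : ℝ) + (V * Vᵀ).trace - 2 * S.trace) := by
  have hSsymm : Sᵀ = S := by simpa [IsHermitian] using hS.isHermitian
  have hdet : IsUnit S.det := (isUnit_iff_isUnit_det S).mp hS.isUnit
  have h_inv_mul : S⁻¹ * (V * Vᵀ) = S := by
    rw [← hSsq, ← Matrix.mul_assoc, nonsing_inv_mul _ hdet, Matrix.one_mul]
  have h_feasible : S⁻¹ * (V * Vᵀ) * S⁻¹ᵀ = 1 := by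
    rw [h_inv_mul, transpose_nonsing_inv, hSsymm, mul_nonsing_inv _ hdet]
  refine ⟨⟨S⁻¹, h_feasible, ?_⟩, ?_⟩
  · rw [trace_mul_transpose_mul_sub_self, h_feasible, h_inv_mul, trace_one, Fintype.card_fin]
  rintro t ⟨P, hP, rfl⟩
  have h_orth : P * S * (P * S)ᵀ = 1 := by
    rw [transpose_mul, hSsymm, ← hP, ← hSsq]
    simp only [Matrix.mul_assoc]
  have h_le : (P * (V * Vᵀ)).trace ≤ S.trace := by
    rw [← hSsq, ← Matrix.mul_assoc]
    exact hS.posSemidef.trace_mul_le_trace_of_mul_transpose_eq_one h_orth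
  rw [trace_mul_transpose_mul_sub_self, hP, trace_one, Fintype.card_fin]
  linarith

theorem stmt_11 {n d : ℕ} (hnd : n ≤ d) (V : Matrix (Fin n) (Fin d) ℝ)
    (hrank : V.rank = n) (S : Matrix (Fin n) (Fin n) ℝ)
    (hS : S.PosDef) (hSsq : S * S = V * Vᵀ) :
    IsLeast {t : ℝ | ∃ P : Matrix (Fin n) (Fin n) ℝ,
        P * (V * Vᵀ) * Pᵀ = 1 ∧ t = ((P * V - V) * (P * V - V)ᵀ).trace}
      ((n : ℝ) + (V * Vᵀ).trace - 2 * S.trace) :=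
  stmt_11_general V S hS hSsq
end
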